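/- Let T ≥ 1 and for i = 1, …, T let X_i ∈ ℝ^{n×d_x}, Y_i ∈ ℝ^{n×d_y}, E_i ∈ ℝ^{d_x×d_y} be real matrices, let ε ≥ 0, and let k, m be integers with 1 ≤ k < m ≤ min(d_x,d_y). Assume that for each i: ‖X_iᵀY_i − E_i‖ ≤ (1+ε)·σ_{m+1}(X_iᵀY_i). Then ‖Σ_{i=1}^T (X_iᵀY_i − E_i)‖ ≤ (1+ε)/(m−k)·( (Σ_{i=1}^T ‖X_i‖_F²)^{1/2}·(Σ_{i=1}^T ‖Y_i‖_F²)^{1/2} − ‖Σ_{i=1}^T X_iᵀY_i‖_k ). -/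

import Mathlib

open scoped BigOperators

/-- `sval M i` is the `i`-th (0-indexed, in nonincreasing order) singular value of the
real matrix `M`, i.e. the square root of the `i`-th largest eigenvalue of `MᵀM`,
with the convention that it is `0` out of range. -/
noncomputable def sval {p q : ℕ} (M : Matrix (Fin p) (Fin q) ℝ) : ℕ → ℝ := fun i =>
  if h : i < q then
    Real.sqrt ((Matrix.isHermitian_conjTranspose_mul_self M).eigenvalues
      ((Tuple.sort (Matrix.isHermitian_conjTranspose_mul_self M).eigenvalues) (Fin.rev ⟨i, h⟩)))
  else 0

/-- The spectral norm `‖M‖ = σ₁(M)`. -/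
noncomputable def specNorm {p q : ℕ} (M : Matrix (Fin p) (Fin q) ℝ) : ℝ := sval M 0

/-- The Ky Fan `k`-norm `‖M‖_k = σ₁(M) + ⋯ + σ_k(M)`. -/
noncomputable def kyFan {p q : ℕ} (M : Matrix (Fin p) (Fin q) ℝ) (k : ℕ) : ℝ :=
  ∑ i ∈ Finset.range k, sval M i

/-- The nuclear norm `‖M‖_* = Σᵢ σᵢ(M)`. -/
noncomputable def nucNorm {p q : ℕ} (M : Matrix (Fin p) (Fin q) ℝ) : ℝ :=
  kyFan M (min p q)

/-- The Frobenius norm `‖M‖_F`. -/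
noncomputable def froNorm {p q : ℕ} (M : Matrix (Fin p) (Fin q) ℝ) : ℝ :=
  Real.sqrt (∑ i, ∑ j, (M i j) ^ 2)

open Matrix

/-! The Ky Fan `k`-norm of `A` is the largest value of `∑ⱼ ⟨uⱼ, A vⱼ⟩` over pairs of orthonormal
families of `k` vectors: expanding `A` in its singular vectors, every such sum is `∑ₜ σₜ cₜ` with
weights `cₜ ≤ 1` of total at most `k`, and the top singular vectors attain the bound. Hence the
Ky Fan norms are subadditive, and `‖XᵀY‖ₖ ≤ ‖X‖_F ‖Y‖_F` by Cauchy–Schwarz. For the blocks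
`Pᵢ = XᵢᵀYᵢ` this gives `‖∑ (Pᵢ - Eᵢ)‖ ≤ (1 + ε) ∑ σ_{m+1}(Pᵢ)` and
`‖∑ Pᵢ‖ₖ + (m - k) ∑ σ_{m+1}(Pᵢ) ≤ ∑ ‖Pᵢ‖ₘ ≤ ∑ ‖Xᵢ‖_F ‖Yᵢ‖_F`, and Cauchy–Schwarz over the
blocks finishes. -/

open Finset

/-- Allowing length below one lets zero vectors pad the singular vectors of a rank-deficient
matrix. -/
structure SubOrthonormal {ι n : Type*} [Fintype n] (u : ι → n → ℝ) : Prop where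
  dotProduct_self_le_one : ∀ i, u i ⬝ᵥ u i ≤ 1
  dotProduct_eq_zero : ∀ ⦃i j⦄, i ≠ j → u i ⬝ᵥ u j = 0

namespace SubOrthonormal

variable {ι n : Type*} [Fintype n] {u : ι → n → ℝ}

theorem dotProduct_sum_smul (hu : SubOrthonormal u) {S : Finset ι} {i : ι} (hi : i ∈ S)
    (c : ι → ℝ) : u i ⬝ᵥ ∑ j ∈ S, c j • u j = c i * (u i ⬝ᵥ u i) := by
  rw [dotProduct_sum, Finset.sum_eq_single_of_mem i hi fun j _ hji => by
    rw [dotProduct_smul, hu.dotProduct_eq_zero hji.symm, smul_zero], dotProduct_smul, smul_eq_mul]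

theorem sum_sq_dotProduct_le (hu : SubOrthonormal u) (S : Finset ι) (x : n → ℝ) :
    ∑ j ∈ S, (x ⬝ᵥ u j) ^ 2 ≤ x ⬝ᵥ x := by
  set s := ∑ j ∈ S, (x ⬝ᵥ u j) • u j with hs
  have hxs : x ⬝ᵥ s = ∑ j ∈ S, (x ⬝ᵥ u j) ^ 2 := by
    simp only [hs, dotProduct_sum, dotProduct_smul, smul_eq_mul, sq]
  have hss : s ⬝ᵥ s ≤ x ⬝ᵥ s := by
    calc s ⬝ᵥ s = ∑ j ∈ S, (x ⬝ᵥ u j) ^ 2 * (u j ⬝ᵥ u j) := by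
          conv_lhs => rw [hs, sum_dotProduct]
          refine Finset.sum_congr rfl fun j hj => ?_
          rw [smul_dotProduct, hu.dotProduct_sum_smul hj, smul_eq_mul]; ring
      _ ≤ x ⬝ᵥ s := by
          rw [hxs]
          exact Finset.sum_le_sum fun j _ =>
            mul_le_of_le_one_right (sq_nonneg _) (hu.dotProduct_self_le_one j)
  have hdiff : 0 ≤ (x - s) ⬝ᵥ (x - s) := dotProduct_self_star_nonneg _
  rw [sub_dotProduct, dotProduct_sub, dotProduct_sub, dotProduct_comm s x] at hdiff
  linarith

variable {κ m : Type*} [Fintype m] {g : κ → n → ℝ}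

theorem sum_sq_dotProduct_le_one (hu : SubOrthonormal u) (hg : SubOrthonormal g)
    (S : Finset ι) (t : κ) : ∑ j ∈ S, (u j ⬝ᵥ g t) ^ 2 ≤ 1 := by
  simp_rw [dotProduct_comm (u _)]
  exact (hu.sum_sq_dotProduct_le S (g t)).trans (hg.dotProduct_self_le_one t)

theorem sum_sum_sq_dotProduct_le_card (hu : SubOrthonormal u) (hg : SubOrthonormal g)
    (S : Finset ι) (T : Finset κ) : ∑ t ∈ T, ∑ j ∈ S, (u j ⬝ᵥ g t) ^ 2 ≤ #S := by
  rw [Finset.sum_comm]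
  calc ∑ j ∈ S, ∑ t ∈ T, (u j ⬝ᵥ g t) ^ 2 ≤ ∑ j ∈ S, u j ⬝ᵥ u j :=
        Finset.sum_le_sum fun j _ => hg.sum_sq_dotProduct_le T (u j)
    _ ≤ ∑ _j ∈ S, (1 : ℝ) := Finset.sum_le_sum fun j _ => hu.dotProduct_self_le_one j
    _ = #S := by simp

theorem sum_sum_sq_mulVec_le (hu : SubOrthonormal u) (X : Matrix m n ℝ) (S : Finset ι) :
    ∑ j ∈ S, ∑ i, (X *ᵥ u j) i ^ 2 ≤ ∑ i, ∑ l, X i l ^ 2 := by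
  rw [Finset.sum_comm]
  refine Finset.sum_le_sum fun i _ => ?_
  simpa [mulVec, dotProduct_comm (u _), dotProduct, sq] using hu.sum_sq_dotProduct_le S (X i)

end SubOrthonormal

theorem sum_mul_le_sum_range_of_antitone {σ x : ℕ → ℝ} (hσ : Antitone σ) {k : ℕ}
    (hσk : 0 ≤ σ k) (s : Finset ℕ) (hx0 : ∀ t ∈ s, 0 ≤ x t) (hx1 : ∀ t ∈ s, x t ≤ 1)
    (hxk : ∑ t ∈ s, x t ≤ k) :
    ∑ t ∈ s, σ t * x t ≤ ∑ t ∈ range k, σ t := by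
  have hterm : ∀ t ∈ s, (σ t - σ k) * x t ≤ if t < k then σ t - σ k else 0 := by
    intro t ht
    split_ifs with htk
    · nlinarith [hσ htk.le, hx1 t ht]
    · nlinarith [hσ (not_lt.1 htk), hx0 t ht]
  have hhead : ∑ t ∈ s, (if t < k then σ t - σ k else 0) ≤ ∑ t ∈ range k, (σ t - σ k) := by
    rw [← Finset.sum_filter]
    refine Finset.sum_le_sum_of_subset_of_nonneg (fun t ht => ?_) fun t ht _ => ?_
    · simpa using (Finset.mem_filter.1 ht).2
    · exact sub_nonneg.2 (hσ (Finset.mem_range.1 ht).le)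
  calc ∑ t ∈ s, σ t * x t = ∑ t ∈ s, (σ t - σ k) * x t + σ k * ∑ t ∈ s, x t := by
        rw [Finset.mul_sum, ← Finset.sum_add_distrib]
        exact Finset.sum_congr rfl fun t _ => by ring
    _ ≤ ∑ t ∈ range k, (σ t - σ k) + σ k * k :=
        add_le_add ((Finset.sum_le_sum hterm).trans hhead) (mul_le_mul_of_nonneg_left hxk hσk)
    _ = ∑ t ∈ range k, σ t := by simp [Finset.sum_sub_distrib]; ring

variable {p q : ℕ}

theorem sval_nonneg (A : Matrix (Fin p) (Fin q) ℝ) (i : ℕ) : 0 ≤ sval A i := by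
  unfold sval
  split_ifs
  exacts [Real.sqrt_nonneg _, le_rfl]

theorem sval_antitone (A : Matrix (Fin p) (Fin q) ℝ) : Antitone (sval A) := by
  intro i j hij
  unfold sval
  by_cases hj : j < q
  · rw [dif_pos hj, dif_pos (hij.trans_lt hj)]
    exact Real.sqrt_le_sqrt <|
      Tuple.monotone_sort (isHermitian_conjTranspose_mul_self A).eigenvalues <|
        Fin.rev_le_rev.2 (Fin.mk_le_mk.2 hij)
  · rw [dif_neg hj]
    exact sval_nonneg A i

/-- Indexed by `ℕ` like `sval`, with the zero vector from index `q` on. -/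
theorem exists_eigenvectors_transpose_mul_self (A : Matrix (Fin p) (Fin q) ℝ) :
    ∃ v : ℕ → Fin q → ℝ, SubOrthonormal v ∧ (∀ t < q, v t ⬝ᵥ v t = 1) ∧
      (∀ x, ∑ t ∈ range q, (x ⬝ᵥ v t) • v t = x) ∧
      ∀ t, (Aᵀ * A) *ᵥ v t = sval A t ^ 2 • v t := by
  have hA := isHermitian_conjTranspose_mul_self A
  let τ := Fin.revPerm.trans (Tuple.sort hA.eigenvalues)
  let b := hA.eigenvectorBasis.reindex τ.symm
  have hb : ∀ i j, ⇑(b i) ⬝ᵥ ⇑(b j) = if i = j then 1 else 0 := by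
    intro i j
    simpa [EuclideanSpace.inner_eq_star_dotProduct, dotProduct_comm] using
      orthonormal_iff_ite.1 b.orthonormal i j
  have hcomplete : ∀ x, ∑ j, (x ⬝ᵥ b j) • ⇑(b j) = x := by
    intro x
    simpa [EuclideanSpace.inner_eq_star_dotProduct, dotProduct_comm] using
      congrArg WithLp.ofLp (b.sum_repr' (WithLp.toLp 2 x))
  have heig : ∀ j : Fin q, (Aᵀ * A) *ᵥ ⇑(b j) = sval A j ^ 2 • ⇑(b j) := by
    intro j
    have hsv : sval A j ^ 2 = hA.eigenvalues (τ j) := by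
      rw [sval, dif_pos j.isLt, Real.sq_sqrt (eigenvalues_conjTranspose_mul_self_nonneg A _)]
      rfl
    simpa [b, hsv, conjTranspose_eq_transpose_of_trivial] using hA.mulVec_eigenvectorBasis (τ j)
  refine ⟨fun t => if h : t < q then b ⟨t, h⟩ else 0, ⟨fun t => ?_, fun s t hst => ?_⟩,
    fun t ht => ?_, fun x => ?_, fun t => ?_⟩
  · dsimp only
    split_ifs <;> simp [hb]
  · dsimp only
    split_ifs <;> simp [hb, hst]
  · simp [ht, hb]
  · rw [← Fin.sum_univ_eq_sum_range]
    simpa using hcomplete x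
  · dsimp only
    split_ifs with ht
    · exact heig ⟨t, ht⟩
    · simp [sval, ht]

theorem exists_singular_vectors (A : Matrix (Fin p) (Fin q) ℝ) :
    ∃ (v : ℕ → Fin q → ℝ) (u : ℕ → Fin p → ℝ), SubOrthonormal v ∧ SubOrthonormal u ∧
      (∀ x, ∑ t ∈ range q, (x ⬝ᵥ v t) • v t = x) ∧
      (∀ t, A *ᵥ v t = sval A t • u t) ∧ ∀ t, u t ⬝ᵥ A *ᵥ v t = sval A t := by
  obtain ⟨v, hv, hv1, hvc, hveig⟩ := exists_eigenvectors_transpose_mul_self A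
  set σ := sval A
  have hAv : ∀ s t, A *ᵥ v s ⬝ᵥ A *ᵥ v t = σ t ^ 2 * (v s ⬝ᵥ v t) := by
    intro s t
    calc A *ᵥ v s ⬝ᵥ A *ᵥ v t = v s ⬝ᵥ (Aᵀ * A) *ᵥ v t := by
          conv_rhs => rw [← mulVec_mulVec, dotProduct_mulVec, vecMul_transpose]
      _ = σ t ^ 2 * (v s ⬝ᵥ v t) := by rw [hveig, dotProduct_smul, smul_eq_mul]
  have hAv0 : ∀ t, σ t = 0 → A *ᵥ v t = 0 := fun t ht =>
    dotProduct_self_eq_zero.1 (by rw [hAv, ht]; ring)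
  have huu : ∀ s t, (σ s)⁻¹ • A *ᵥ v s ⬝ᵥ (σ t)⁻¹ • A *ᵥ v t =
      (σ s)⁻¹ * (σ t)⁻¹ * (σ t ^ 2 * (v s ⬝ᵥ v t)) := by
    intro s t
    rw [smul_dotProduct, dotProduct_smul, hAv, smul_eq_mul, smul_eq_mul, mul_assoc]
  -- `(σ t)⁻¹ • A *ᵥ v t` is the zero vector when `σ t = 0`, as `0⁻¹ = 0`.
  refine ⟨v, fun t => (σ t)⁻¹ • A *ᵥ v t, hv, ⟨fun t => ?_, fun s t hst => ?_⟩, hvc,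
    fun t => ?_, fun t => ?_⟩
  · rw [huu]
    by_cases hσ : σ t = 0
    · simp [hσ]
    · field_simp
      exact hv.dotProduct_self_le_one t
  · rw [huu, hv.dotProduct_eq_zero hst, mul_zero, mul_zero]
  · by_cases hσ : σ t = 0
    · simp [hσ, hAv0 t hσ]
    · rw [smul_inv_smul₀ hσ]
  · by_cases hσ : σ t = 0
    · simp [hσ]
    · have ht : t < q := by
        by_contra ht
        exact hσ (dif_neg ht)
      rw [smul_dotProduct, hAv, hv1 t ht, smul_eq_mul]
      field_simp

theorem exists_kyFan_eq_sum_dotProduct_mulVec (A : Matrix (Fin p) (Fin q) ℝ) :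
    ∃ (u : ℕ → Fin p → ℝ) (v : ℕ → Fin q → ℝ), SubOrthonormal u ∧ SubOrthonormal v ∧
      ∀ k, kyFan A k = ∑ t ∈ range k, u t ⬝ᵥ A *ᵥ v t := by
  obtain ⟨v, u, hv, hu, -, -, huv⟩ := exists_singular_vectors A
  exact ⟨u, v, hu, hv, fun k => by simp [kyFan, huv]⟩

theorem sum_dotProduct_mulVec_le_kyFan {ι : Type*} (A : Matrix (Fin p) (Fin q) ℝ) {k : ℕ}
    {S : Finset ι} (hS : #S ≤ k) {u : ι → Fin p → ℝ} {v : ι → Fin q → ℝ}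
    (hu : SubOrthonormal u) (hv : SubOrthonormal v) :
    ∑ j ∈ S, u j ⬝ᵥ A *ᵥ v j ≤ kyFan A k := by
  obtain ⟨w, b, hw, hb, hwc, hAw, -⟩ := exists_singular_vectors A
  have hexpand : ∀ j, u j ⬝ᵥ A *ᵥ v j =
      ∑ t ∈ range q, sval A t * ((v j ⬝ᵥ w t) * (u j ⬝ᵥ b t)) := by
    intro j
    conv_lhs => rw [← hwc (v j), mulVec_sum, dotProduct_sum]
    refine Finset.sum_congr rfl fun t _ => ?_
    rw [mulVec_smul, hAw, dotProduct_smul, dotProduct_smul, smul_eq_mul, smul_eq_mul]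
    ring
  let α t := ∑ j ∈ S, (v j ⬝ᵥ w t) ^ 2
  let β t := ∑ j ∈ S, (u j ⬝ᵥ b t) ^ 2
  have hcard : ∀ {n : ℕ} {f : ι → Fin n → ℝ} {g : ℕ → Fin n → ℝ},
      SubOrthonormal f → SubOrthonormal g → ∑ t ∈ range q, ∑ j ∈ S, (f j ⬝ᵥ g t) ^ 2 ≤ k :=
    fun hf hg => (hf.sum_sum_sq_dotProduct_le_card hg S _).trans (Nat.cast_le.2 hS)
  calc ∑ j ∈ S, u j ⬝ᵥ A *ᵥ v j
      = ∑ t ∈ range q, sval A t * ∑ j ∈ S, (v j ⬝ᵥ w t) * (u j ⬝ᵥ b t) := by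
        simp_rw [hexpand, Finset.mul_sum]
        exact Finset.sum_comm
    _ ≤ ∑ t ∈ range q, sval A t * ((α t + β t) / 2) := by
        gcongr with t
        · exact sval_nonneg A t
        · rw [← Finset.sum_add_distrib, Finset.sum_div]
          exact Finset.sum_le_sum fun j _ => by
            nlinarith [two_mul_le_add_sq (v j ⬝ᵥ w t) (u j ⬝ᵥ b t)]
    _ ≤ kyFan A k := by
        refine sum_mul_le_sum_range_of_antitone (sval_antitone A) (sval_nonneg A k) _
          (fun t _ => by positivity) (fun t _ => ?_) ?_
        · linarith [hv.sum_sq_dotProduct_le_one hw S t, hu.sum_sq_dotProduct_le_one hb S t]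
        · rw [← Finset.sum_div, Finset.sum_add_distrib]
          linarith [hcard hv hw, hcard hu hb]

theorem kyFan_sum_le {ι : Type*} (s : Finset ι) (A : ι → Matrix (Fin p) (Fin q) ℝ) (k : ℕ) :
    kyFan (∑ i ∈ s, A i) k ≤ ∑ i ∈ s, kyFan (A i) k := by
  obtain ⟨u, v, hu, hv, h⟩ := exists_kyFan_eq_sum_dotProduct_mulVec (∑ i ∈ s, A i)
  calc kyFan (∑ i ∈ s, A i) k = ∑ i ∈ s, ∑ t ∈ range k, u t ⬝ᵥ A i *ᵥ v t := by
        simp_rw [h, sum_mulVec, dotProduct_sum]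
        exact Finset.sum_comm
    _ ≤ ∑ i ∈ s, kyFan (A i) k :=
        Finset.sum_le_sum fun i _ => sum_dotProduct_mulVec_le_kyFan (A i) (by simp) hu hv

theorem kyFan_one (A : Matrix (Fin p) (Fin q) ℝ) : kyFan A 1 = specNorm A := by
  simp [kyFan, specNorm]

theorem kyFan_add_mul_sval_le (A : Matrix (Fin p) (Fin q) ℝ) {k m : ℕ} (hkm : k ≤ m) :
    kyFan A k + ((m : ℝ) - k) * sval A m ≤ kyFan A m := by
  have htail := Finset.card_nsmul_le_sum (Ico k m) (sval A) (sval A m) fun t ht =>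
    sval_antitone A (Finset.mem_Ico.1 ht).2.le
  rw [Nat.card_Ico, nsmul_eq_mul, Nat.cast_sub hkm] at htail
  rw [kyFan, kyFan, ← Finset.sum_range_add_sum_Ico _ hkm]
  linarith

theorem kyFan_transpose_mul_le {n : ℕ} (X : Matrix (Fin n) (Fin p) ℝ)
    (Y : Matrix (Fin n) (Fin q) ℝ) (k : ℕ) : kyFan (Xᵀ * Y) k ≤ froNorm X * froNorm Y := by
  obtain ⟨u, v, hu, hv, h⟩ := exists_kyFan_eq_sum_dotProduct_mulVec (Xᵀ * Y)
  calc kyFan (Xᵀ * Y) k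
      = ∑ x ∈ range k ×ˢ univ, (X *ᵥ u x.1) x.2 * (Y *ᵥ v x.1) x.2 := by
        rw [h, Finset.sum_product]
        refine Finset.sum_congr rfl fun t _ => ?_
        rw [← mulVec_mulVec, dotProduct_mulVec, vecMul_transpose]
        rfl
    _ ≤ √(∑ x ∈ range k ×ˢ univ, (X *ᵥ u x.1) x.2 ^ 2) *
          √(∑ x ∈ range k ×ˢ univ, (Y *ᵥ v x.1) x.2 ^ 2) :=
        Real.sum_mul_le_sqrt_mul_sqrt _ _ _
    _ ≤ froNorm X * froNorm Y := by
        rw [Finset.sum_product, Finset.sum_product, froNorm, froNorm]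
        gcongr
        exacts [hu.sum_sum_sq_mulVec_le X _, hv.sum_sum_sq_mulVec_le Y _]

theorem blockwise_compression_error_general
    {n dx dy T : ℕ}
    (X : Fin T → Matrix (Fin n) (Fin dx) ℝ) (Y : Fin T → Matrix (Fin n) (Fin dy) ℝ)
    (E : Fin T → Matrix (Fin dx) (Fin dy) ℝ)
    (ε : ℝ) (hε : 0 ≤ ε) (k m : ℕ) (hkm : k < m)
    (h : ∀ i, specNorm ((X i)ᵀ * Y i - E i) ≤ (1 + ε) * sval ((X i)ᵀ * Y i) m) :
    specNorm (∑ i, ((X i)ᵀ * Y i - E i)) ≤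
      (1 + ε) / ((m : ℝ) - (k : ℝ)) *
        (Real.sqrt (∑ i, froNorm (X i) ^ 2) * Real.sqrt (∑ i, froNorm (Y i) ^ 2) -
          kyFan (∑ i, (X i)ᵀ * Y i) k) := by
  have herr : specNorm (∑ i, ((X i)ᵀ * Y i - E i)) ≤ (1 + ε) * ∑ i, sval ((X i)ᵀ * Y i) m :=
    calc specNorm (∑ i, ((X i)ᵀ * Y i - E i))
        ≤ ∑ i, specNorm ((X i)ᵀ * Y i - E i) := by
          simpa only [kyFan_one] using kyFan_sum_le univ (fun i => (X i)ᵀ * Y i - E i) 1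
      _ ≤ (1 + ε) * ∑ i, sval ((X i)ᵀ * Y i) m := by
          rw [Finset.mul_sum]
          exact Finset.sum_le_sum fun i _ => h i
  have hgap : kyFan (∑ i, (X i)ᵀ * Y i) k + ((m : ℝ) - k) * ∑ i, sval ((X i)ᵀ * Y i) m ≤
      Real.sqrt (∑ i, froNorm (X i) ^ 2) * Real.sqrt (∑ i, froNorm (Y i) ^ 2) :=
    calc _ ≤ ∑ i, (kyFan ((X i)ᵀ * Y i) k + ((m : ℝ) - k) * sval ((X i)ᵀ * Y i) m) := by
          rw [Finset.sum_add_distrib, Finset.mul_sum]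
          gcongr
          exact kyFan_sum_le _ _ k
      _ ≤ ∑ i, froNorm (X i) * froNorm (Y i) := Finset.sum_le_sum fun i _ =>
          (kyFan_add_mul_sval_le _ hkm.le).trans (kyFan_transpose_mul_le _ _ m)
      _ ≤ _ := Real.sum_mul_le_sqrt_mul_sqrt _ _ _
  have hmk : (0 : ℝ) < m - k := sub_pos.2 (Nat.cast_lt.2 hkm)
  calc specNorm (∑ i, ((X i)ᵀ * Y i - E i)) ≤ (1 + ε) * ∑ i, sval ((X i)ᵀ * Y i) m := herr
    _ ≤ (1 + ε) * ((Real.sqrt (∑ i, froNorm (X i) ^ 2) * Real.sqrt (∑ i, froNorm (Y i) ^ 2) -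
          kyFan (∑ i, (X i)ᵀ * Y i) k) / ((m : ℝ) - k)) := by
        gcongr
        rw [le_div_iff₀ hmk]
        linarith
    _ = _ := by ring

/-- deterministic core of Lemma 8: blockwise `(1+ε)σ_{m+1}`
compression errors sum to the global compression bound. -/
theorem blockwise_compression_error
    {n dx dy T : ℕ} (hT : 1 ≤ T)
    (X : Fin T → Matrix (Fin n) (Fin dx) ℝ) (Y : Fin T → Matrix (Fin n) (Fin dy) ℝ)
    (E : Fin T → Matrix (Fin dx) (Fin dy) ℝ)
    (ε : ℝ) (hε : 0 ≤ ε) (k m : ℕ) (hk1 : 1 ≤ k) (hkm : k < m) (hm : m ≤ min dx dy)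
    (h : ∀ i, specNorm ((X i)ᵀ * Y i - E i) ≤ (1 + ε) * sval ((X i)ᵀ * Y i) m) :
    specNorm (∑ i, ((X i)ᵀ * Y i - E i)) ≤
      (1 + ε) / ((m : ℝ) - (k : ℝ)) *
        (Real.sqrt (∑ i, froNorm (X i) ^ 2) * Real.sqrt (∑ i, froNorm (Y i) ^ 2) -
          kyFan (∑ i, (X i)ᵀ * Y i) k) :=
  blockwise_compression_error_general X Y E ε hε k m hkm h
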